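/- arXiv:2004.06508 — 4 statements merged into one kernel-verified Lean document; each statement's English description precedes it below -/
import Mathlib

section
/- Let n be a positive integer, B : ℝ^n × ℝ^n → ℝ^n a bilinear map, V₀, F ∈ ℝ^n, and define B^1(V₀) = {V₀} and B^k(V₀) = ⋃_{i=1}^{k-1} {B(x,y) : x ∈ B^i(V₀), y ∈ B^{k-i}(V₀)}. Suppose there is a bounded set X ⊆ ℝ^n whose convex hull contains V₀ and satisfies B(u,v) ∈ conv(X) for all u,v ∈ X. Then for every k ≥ 1 and every u ∈ B^k(V₀), one has |F · u| ≤ sup_{x ∈ X} |F · x|. -/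
open Matrix

/-- `BIter B v₀ k u` : `u` is obtainable by a fully parenthesized expression over the
binary map `B` using exactly `k` occurrences of `v₀`. -/
inductive BIter {E : Type*} (B : E → E → E) (v₀ : E) : ℕ → E → Prop
  | base : BIter B v₀ 1 v₀
  | step {i j : ℕ} {x y : E} (hx : BIter B v₀ i x) (hy : BIter B v₀ j y) :
      BIter B v₀ (i + j) (B x y)

/-!
For fixed `x` the preimage of `conv X` under `B x` is convex, and likewise in the other argument,
so `B` maps `conv X × conv X` into `conv X` and every iterate of `V₀` lies in `conv X`. There the
convex function `|F ⬝ᵥ ·|` is bounded by its values on `X` (maximum principle).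
-/

open Set

theorem BIter.mem_of_closed {E : Type*} {B : E → E → E} {v₀ : E} {S : Set E}
    (hv₀ : v₀ ∈ S) (hS : ∀ x ∈ S, ∀ y ∈ S, B x y ∈ S) {k : ℕ} {u : E}
    (h : BIter B v₀ k u) : u ∈ S := by
  induction h with
  | base => exact hv₀
  | step _ _ ihx ihy => exact hS _ ihx _ ihy

theorem LinearMap.image2_convexHull_subset {𝕜 E F G : Type*} [Field 𝕜] [LinearOrder 𝕜]
    [IsStrictOrderedRing 𝕜] [AddCommGroup E] [AddCommGroup F] [AddCommGroup G]
    [Module 𝕜 E] [Module 𝕜 F] [Module 𝕜 G] (B : E →ₗ[𝕜] F →ₗ[𝕜] G) {s : Set E} {t : Set F}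
    {u : Set G} (h : ∀ x ∈ s, ∀ y ∈ t, B x y ∈ convexHull 𝕜 u) :
    image2 (fun x y => B x y) (convexHull 𝕜 s) (convexHull 𝕜 t) ⊆ convexHull 𝕜 u := by
  have hleft : ∀ x ∈ s, convexHull 𝕜 t ⊆ B x ⁻¹' convexHull 𝕜 u := fun x hx =>
    convexHull_min (h x hx) ((convex_convexHull 𝕜 u).linear_preimage (B x))
  have hright : ∀ y ∈ convexHull 𝕜 t, convexHull 𝕜 s ⊆ B.flip y ⁻¹' convexHull 𝕜 u :=
    fun y hy => convexHull_min (fun x hx => hleft x hx hy)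
      ((convex_convexHull 𝕜 u).linear_preimage (B.flip y))
  rintro _ ⟨x, hx, y, hy, rfl⟩
  exact hright y hy hx

theorem Bornology.IsBounded.bddAbove_image {E : Type*} [PseudoMetricSpace E] [ProperSpace E]
    {X : Set E} (hX : Bornology.IsBounded X) {f : E → ℝ} (hf : Continuous f) :
    BddAbove (f '' X) :=
  (hX.isCompact_closure.image hf).bddAbove.mono (image_mono subset_closure)

theorem le_biSup_of_bddAbove_image {α β : Type*} [ConditionallyCompleteLattice α] {f : β → α}
    {s : Set β} (H : BddAbove (f '' s)) {c : β} (hc : c ∈ s) : f c ≤ ⨆ x ∈ s, f x :=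
  le_ciSup₂ (f := fun x (_ : x ∈ s) => f x)
    (H.mono <| by rintro _ ⟨_, ⟨i, rfl⟩, hi, rfl⟩; exact mem_image_of_mem f hi) c hc

theorem stmt_0_general (n : ℕ)
    (B : (Fin n → ℝ) →ₗ[ℝ] (Fin n → ℝ) →ₗ[ℝ] (Fin n → ℝ))
    (V₀ F : Fin n → ℝ) (X : Set (Fin n → ℝ))
    (hXbdd : Bornology.IsBounded X)
    (hV₀ : V₀ ∈ convexHull ℝ X)
    (hBX : ∀ u ∈ X, ∀ v ∈ X, B u v ∈ convexHull ℝ X) :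
    ∀ k : ℕ, 1 ≤ k → ∀ u : Fin n → ℝ, BIter (fun x y => B x y) V₀ k u →
      |F ⬝ᵥ u| ≤ ⨆ x ∈ X, |F ⬝ᵥ x| := by
  intro k _ u hu
  have hu_mem : u ∈ convexHull ℝ X :=
    hu.mem_of_closed hV₀ fun x hx y hy => B.image2_convexHull_subset hBX (mem_image2_of_mem hx hy)
  have hconvex : ConvexOn ℝ univ fun x : Fin n → ℝ => |F ⬝ᵥ x| :=
    convexOn_univ_norm.comp_linearMap (dotProductBilin ℝ ℝ F)
  obtain ⟨y, hy, huy⟩ := hconvex.exists_ge_of_mem_convexHull (subset_univ X) hu_mem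
  have hbdd : BddAbove ((fun x => |F ⬝ᵥ x|) '' X) := hXbdd.bddAbove_image (by fun_prop)
  exact huy.trans (le_biSup_of_bddAbove_image hbdd hy)

theorem stmt_0 (n : ℕ) (hn : 0 < n)
    (B : (Fin n → ℝ) →ₗ[ℝ] (Fin n → ℝ) →ₗ[ℝ] (Fin n → ℝ))
    (V₀ F : Fin n → ℝ) (X : Set (Fin n → ℝ))
    (hXbdd : Bornology.IsBounded X)
    (hV₀ : V₀ ∈ convexHull ℝ X)
    (hBX : ∀ u ∈ X, ∀ v ∈ X, B u v ∈ convexHull ℝ X) :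
    ∀ k : ℕ, 1 ≤ k → ∀ u : Fin n → ℝ, BIter (fun x y => B x y) V₀ k u →
      |F ⬝ᵥ u| ≤ ⨆ x ∈ X, |F ⬝ᵥ x| :=
  stmt_0_general n B V₀ F X hXbdd hV₀ hBX
end

section
/- For every positive integer k there exists a tree on 7k vertices with at least 3^k perfect codes. Consequently the growth rate limsup over trees of order n of the maximum number of perfect codes, raised to power 1/n, is at least 3^{1/7}. -/
/-!
In each of the `k` blocks of `T_k` choose one of the three legs; the middle vertex of the chosen
leg together with the leaves of the two other legs is a perfect code: the center and the chosen
leaf are dominated by the chosen middle vertex, every other middle vertex by its own leaf. The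
choices in different blocks are independent, so `T_k` has at least `3 ^ k` perfect codes on `7k`
vertices, and along `n = 7k` the `n`-th root of the maximum is at least `3 ^ (1 / 7)`.
That `T_k` is a tree is seen from its parent pointers: it is connected and has one edge per
non-root vertex.
-/

/-- `S` is a perfect code of `G` : an independent set such that every vertex outside
`S` has exactly one neighbor in `S`. -/
def IsPerfectCode {V : Type*} (G : SimpleGraph V) (S : Set V) : Prop :=
  (∀ a ∈ S, ∀ b ∈ S, ¬ G.Adj a b) ∧ (∀ v, v ∉ S → ∃! u, u ∈ S ∧ G.Adj u v)

open SimpleGraph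

section PerfectCode

variable {V W : Type*} {G : SimpleGraph V} {H : SimpleGraph W}

theorem IsPerfectCode.preimage (e : G ≃g H) {S : Set W} (hS : IsPerfectCode H S) :
    IsPerfectCode G (e ⁻¹' S) := by
  refine ⟨fun a ha b hb hab => hS.1 _ ha _ hb (e.map_adj_iff.2 hab), fun v hv => ?_⟩
  obtain ⟨u, ⟨huS, hu⟩, huniq⟩ := hS.2 (e v) hv
  refine ⟨e.symm u, ⟨by simpa using huS, by simpa [← e.map_adj_iff] using hu⟩, ?_⟩
  rintro w ⟨hwS, hw⟩
  rw [← huniq (e w) ⟨hwS, e.map_adj_iff.2 hw⟩, e.symm_apply_apply]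

theorem card_isPerfectCode_le_of_iso [Finite V] (e : G ≃g H) :
    Nat.card {S // IsPerfectCode G S} ≤ Nat.card {S // IsPerfectCode H S} := by
  have : Finite W := .of_equiv V e.toEquiv
  refine Nat.card_le_card_of_injective (fun S => ⟨e.symm ⁻¹' S.1, S.2.preimage e.symm⟩) ?_
  intro S T hST
  exact Subtype.ext <| Set.preimage_injective.2 e.symm.surjective (congrArg Subtype.val hST)

end PerfectCode

section ParentGraph

variable {V : Type*} (parent : V → V)

/-- The root is the fixed point of `parent`; `fromRel` discards the loop there. -/
def parentGraph : SimpleGraph V := SimpleGraph.fromRel fun v w => parent v = w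

variable {parent}

@[simp] theorem parentGraph_adj {v w : V} :
    (parentGraph parent).Adj v w ↔ v ≠ w ∧ (parent v = w ∨ parent w = v) := .rfl

variable {root : V} {rank : V → ℕ}

theorem parentGraph_adj_parent (hrank : ∀ v ≠ root, rank (parent v) < rank v) {v : V}
    (hv : v ≠ root) : (parentGraph parent).Adj v (parent v) :=
  ⟨fun h => (hrank v hv).ne (by rw [← h]), Or.inl rfl⟩

theorem parentGraph_reachable_root (hrank : ∀ v ≠ root, rank (parent v) < rank v) (v : V) :
    (parentGraph parent).Reachable v root := by
  induction h : rank v using Nat.strong_induction_on generalizing v with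
  | _ n ih =>
    by_cases hv : v = root
    · rw [hv]
    exact (parentGraph_adj_parent hrank hv).reachable.trans (ih _ (h ▸ hrank v hv) _ rfl)

theorem parentGraph_connected (hrank : ∀ v ≠ root, rank (parent v) < rank v) :
    (parentGraph parent).Connected :=
  have := parentGraph_reachable_root hrank
  (connected_iff _).2 ⟨fun u v => (this u).trans (this v).symm, ⟨root⟩⟩

theorem parentGraph_card_edgeSet_add_one [Finite V] (hroot : parent root = root)
    (hrank : ∀ v ≠ root, rank (parent v) < rank v) :
    Nat.card (parentGraph parent).edgeSet + 1 = Nat.card V := by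
  classical
  have hedge : Function.Bijective fun v : {v // v ≠ root} =>
      (⟨s(v, parent v), parentGraph_adj_parent hrank v.2⟩ : (parentGraph parent).edgeSet) := by
    refine ⟨?_, ?_⟩
    · rintro ⟨v, hv⟩ ⟨w, hw⟩ h
      rcases Sym2.eq_iff.1 (congrArg Subtype.val h) with ⟨h, -⟩ | ⟨hvw, hwv⟩
      · exact Subtype.ext h
      · dsimp only at hvw hwv
        have hvw : rank v < rank w := hvw ▸ hrank w hw
        have hwv : rank w < rank v := hwv ▸ hrank v hv
        omega
    · rintro ⟨e, he⟩
      induction e using Sym2.ind with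
      | _ a b =>
      obtain ⟨hab, hpar | hpar⟩ : a ≠ b ∧ (parent a = b ∨ parent b = a) := he
      · subst hpar
        exact ⟨⟨a, fun h => hab (by rw [h, hroot])⟩, rfl⟩
      · subst hpar
        exact ⟨⟨b, fun h => hab (by rw [h, hroot])⟩, Subtype.ext Sym2.eq_swap⟩
  rw [← Nat.card_eq_of_bijective _ hedge, ← Finite.card_option,
    Nat.card_congr (Equiv.optionSubtypeNe root)]

theorem parentGraph_isTree [Finite V] (hroot : parent root = root)
    (hrank : ∀ v ≠ root, rank (parent v) < rank v) : (parentGraph parent).IsTree :=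
  isTree_iff_connected_and_card.2
    ⟨parentGraph_connected hrank, parentGraph_card_edgeSet_add_one hroot hrank⟩

end ParentGraph

inductive SpiderVertex (ι : Type*)
  | center
  | middle (j : ι)
  | leaf (j : ι)

namespace SpiderVertex

variable {ι : Type*}

def equivOption : SpiderVertex ι ≃ Option (ι ⊕ ι) where
  toFun
    | center => none
    | middle j => some (.inl j)
    | leaf j => some (.inr j)
  invFun
    | none => center
    | some (.inl j) => middle j
    | some (.inr j) => leaf j
  left_inv v := by cases v <;> rfl
  right_inv v := by rcases v with _ | _ | _ <;> rfl

instance [Finite ι] : Finite (SpiderVertex ι) := .of_equiv _ equivOption.symm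

theorem card_eq [Finite ι] : Nat.card (SpiderVertex ι) = 2 * Nat.card ι + 1 := by
  rw [Nat.card_congr equivOption, Finite.card_option, Nat.card_sum, two_mul]

end SpiderVertex

variable {ι : Type*} {k : ℕ}

/-- Block `i` of `T_k` is `{i} × SpiderVertex ι`; the centers form a path towards the root,
the center of block `0`. -/
def spiderParent : Fin k × SpiderVertex ι → Fin k × SpiderVertex ι
  | (i, .center) => (⟨i - 1, by omega⟩, .center)
  | (i, .middle _) => (i, .center)
  | (i, .leaf j) => (i, .middle j)

def spiderRank : Fin k × SpiderVertex ι → ℕ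
  | (i, .center) => 3 * i
  | (i, .middle _) => 3 * i + 1
  | (i, .leaf _) => 3 * i + 2

variable (ι k) in
def spiderChain : SimpleGraph (Fin k × SpiderVertex ι) := parentGraph spiderParent

theorem spiderChain_isTree [Finite ι] (hk : 0 < k) : (spiderChain ι k).IsTree := by
  refine parentGraph_isTree (root := (⟨0, hk⟩, .center)) (rank := spiderRank) rfl ?_
  rintro ⟨i, _ | j | j⟩ hv <;> simp [spiderParent, spiderRank, Fin.ext_iff] at hv ⊢
  omega

def spiderCode (f : Fin k → ι) : Set (Fin k × SpiderVertex ι)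
  | (_, .center) => False
  | (i, .middle j) => j = f i
  | (i, .leaf j) => j ≠ f i

section spiderCode

variable {f : Fin k → ι} {i : Fin k} {j : ι}

@[simp] theorem center_notMem_spiderCode : (i, .center) ∉ spiderCode f := id

@[simp] theorem middle_mem_spiderCode : (i, .middle j) ∈ spiderCode f ↔ j = f i := .rfl

@[simp] theorem leaf_mem_spiderCode : (i, .leaf j) ∈ spiderCode f ↔ j ≠ f i := .rfl

end spiderCode

theorem isPerfectCode_spiderCode (f : Fin k → ι) :
    IsPerfectCode (spiderChain ι k) (spiderCode f) := by
  refine ⟨?_, ?_⟩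
  · rintro ⟨i, _ | j | j⟩ ha ⟨i', _ | j' | j'⟩ hb hab <;>
      simp_all [spiderChain, spiderParent]
  · rintro ⟨i, _ | j | j⟩ hv
    · refine ⟨(i, .middle (f i)), by simp [spiderChain, spiderParent], ?_⟩
      rintro ⟨i', _ | j' | j'⟩ ⟨hu, hadj⟩ <;> simp_all [spiderChain, spiderParent]
    · refine ⟨(i, .leaf j), by simp_all [spiderChain, spiderParent], ?_⟩
      rintro ⟨i', _ | j' | j'⟩ ⟨hu, hadj⟩ <;> simp_all [spiderChain, spiderParent]
    · refine ⟨(i, .middle j), by simp_all [spiderChain, spiderParent], ?_⟩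
      rintro ⟨i', _ | j' | j'⟩ ⟨hu, hadj⟩ <;> simp_all [spiderChain, spiderParent]

theorem spiderCode_injective : Function.Injective (spiderCode : (Fin k → ι) → Set _) := by
  intro f g h
  funext i
  simpa using (Set.ext_iff.1 h (i, .middle (f i))).1 rfl

theorem card_pow_le_card_isPerfectCode_spiderChain [Finite ι] :
    Nat.card ι ^ k ≤ Nat.card {S // IsPerfectCode (spiderChain ι k) S} := by
  calc Nat.card ι ^ k = Nat.card (Fin k → ι) := by rw [Nat.card_fun, Nat.card_fin]
    _ ≤ _ := Nat.card_le_card_of_injective (fun f => ⟨spiderCode f, isPerfectCode_spiderCode f⟩)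
      fun f g h => spiderCode_injective (congrArg Subtype.val h)

theorem exists_isTree_card_pow_le_card_isPerfectCode [Finite ι] {n : ℕ} (hk : 0 < k)
    (hn : (2 * Nat.card ι + 1) * k = n) :
    ∃ T : SimpleGraph (Fin n), T.IsTree ∧ Nat.card ι ^ k ≤ Nat.card {S // IsPerfectCode T S} := by
  let e : Fin k × SpiderVertex ι ≃ Fin n := Finite.equivFinOfCardEq <| by
    rw [Nat.card_prod, Nat.card_fin, SpiderVertex.card_eq, ← hn, mul_comm]
  let φ := Iso.map e (spiderChain ι k)
  exact ⟨_, φ.isTree_iff.1 (spiderChain_isTree hk),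
    card_pow_le_card_isPerfectCode_spiderChain.trans (card_isPerfectCode_le_of_iso φ)⟩

open Filter

theorem rpow_one_div_le_limsup_root {u : ℕ → ℝ} {B c : ℝ} {d : ℕ} (hd : 0 < d) (hc : 0 ≤ c)
    (hB : 0 ≤ B) (hu : ∀ n, 0 ≤ u n) (huB : ∀ n, u n ≤ B ^ n)
    (hcu : ∀ k, 0 < k → c ^ k ≤ u (d * k)) :
    c ^ (1 / d : ℝ) ≤ limsup (fun n : ℕ => u n ^ (1 / n : ℝ)) atTop := by
  refine le_limsup_of_frequently_le ?_ ?_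
  · refine frequently_atTop.2 fun N => ⟨d * (N + 1), by nlinarith, ?_⟩
    calc c ^ (1 / d : ℝ) = (c ^ (N + 1)) ^ (1 / (d * (N + 1) : ℕ) : ℝ) := by
          rw [← Real.rpow_natCast c, ← Real.rpow_mul hc]
          push_cast
          field_simp
      _ ≤ u (d * (N + 1)) ^ (1 / (d * (N + 1) : ℕ) : ℝ) :=
          Real.rpow_le_rpow (by positivity) (hcu _ N.succ_pos) (by positivity)
  · refine isBoundedUnder_of_eventually_le (a := B) (eventually_atTop.2 ⟨1, fun n hn => ?_⟩)
    calc u n ^ (1 / n : ℝ) ≤ (B ^ n) ^ (1 / n : ℝ) :=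
          Real.rpow_le_rpow (hu n) (huB n) (by positivity)
      _ = B := by rw [one_div, Real.pow_rpow_inv_natCast hB (by omega)]

theorem stmt_7 :
    (∀ k : ℕ, 0 < k → ∃ T : SimpleGraph (Fin (7 * k)),
      T.Connected ∧ T.IsAcyclic ∧
      3 ^ k ≤ Nat.card {S : Set (Fin (7 * k)) // IsPerfectCode T S}) ∧
    (3 : ℝ) ^ ((1 : ℝ) / 7) ≤
      Filter.atTop.limsup (fun n : ℕ =>
        ((sSup {m : ℕ | ∃ T : SimpleGraph (Fin n), T.Connected ∧ T.IsAcyclic ∧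
          m = Nat.card {S : Set (Fin n) // IsPerfectCode T S}} : ℕ) : ℝ) ^ ((1 : ℝ) / n)) := by
  have trees (k : ℕ) (hk : 0 < k) : ∃ T : SimpleGraph (Fin (7 * k)),
      T.Connected ∧ T.IsAcyclic ∧ 3 ^ k ≤ Nat.card {S // IsPerfectCode T S} := by
    obtain ⟨T, hT, hcard⟩ := exists_isTree_card_pow_le_card_isPerfectCode (ι := Fin 3) hk
      (by rw [Nat.card_fin])
    exact ⟨T, hT.connected, hT.isAcyclic, by simpa using hcard⟩
  refine ⟨trees, ?_⟩
  set A : ℕ → Set ℕ := fun n => {m | ∃ T : SimpleGraph (Fin n), T.Connected ∧ T.IsAcyclic ∧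
    m = Nat.card {S : Set (Fin n) // IsPerfectCode T S}}
  have hA (n : ℕ) : ∀ m ∈ A n, m ≤ 2 ^ n := by
    rintro m ⟨T, -, -, rfl⟩
    calc _ ≤ Nat.card (Set (Fin n)) := Finite.card_subtype_le _
      _ = 2 ^ n := by simp
  refine rpow_one_div_le_limsup_root (d := 7) (B := 2) (by norm_num) (by norm_num) (by norm_num)
    (fun n => Nat.cast_nonneg _) (fun n => by exact_mod_cast csSup_le' (hA n)) fun k hk => ?_
  obtain ⟨T, hconn, hacyc, hcard⟩ := trees k hk
  exact_mod_cast hcard.trans (le_csSup ⟨_, hA _⟩ ⟨T, hconn, hacyc, rfl⟩)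
end

section
/- The characteristic polynomial of the matrix M = [[0,0,0,1,0,0],[1,0,1,0,1,1],[0,0,0,0,0,0],[0,1,0,0,0,0],[1,0,0,0,0,0],[0,0,0,0,1,0]] has largest real root equal to the real root α of x³ − x − 1 lying in (1,2); in particular α is an eigenvalue of M and every eigenvalue of M has absolute value at most α. -/
/-! The characteristic polynomial factors as `X (X² + 1)(X³ - X - 1)`. In any normed field its
roots are `0`, roots of norm `1`, and roots `z` of `X³ = X + 1`, for which `‖z‖³ ≤ ‖z‖ + 1`;
since `t ↦ t³ - t` is increasing past `1`, this forces `‖z‖ ≤ α`. The bound on real roots is the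
case of `ℝ`, where `x ≤ |x|`. -/

def Mmpds : Matrix (Fin 6) (Fin 6) ℝ :=
  !![0,0,0,1,0,0; 1,0,1,0,1,1; 0,0,0,0,0,0; 0,1,0,0,0,0; 1,0,0,0,0,0; 0,0,0,0,1,0]

open Polynomial Matrix

theorem charmatrix_Mmpds : charmatrix Mmpds =
    !![X, 0, 0, -1, 0, 0; -1, X, -1, 0, -1, -1; 0, 0, X, 0, 0, 0;
      0, -1, 0, X, 0, 0; -1, 0, 0, 0, X, 0; 0, 0, 0, 0, -1, X] := by
  ext i j
  fin_cases i <;> fin_cases j <;> simp [Mmpds]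

theorem charpoly_Mmpds : Mmpds.charpoly = X * (X ^ 2 + 1) * (X ^ 3 - X - 1) := by
  rw [charpoly, charmatrix_Mmpds]
  eval_det
  ring

theorem charpoly_map_Mmpds {R : Type*} [CommRing R] (f : ℝ →+* R) :
    (Mmpds.map f).charpoly = X * (X ^ 2 + 1) * (X ^ 3 - X - 1) := by
  simp [charpoly_map, charpoly_Mmpds]

theorem le_of_pow_three_le_add_one {t α : ℝ} (h : t ^ 3 ≤ t + 1) (hα : 1 < α)
    (hroot : α ^ 3 = α + 1) : t ≤ α := by
  by_contra! hlt
  -- `t³ - α³ = (t - α)(t² + tα + α²) > t - α`, whereas `t³ - t ≤ 1 = α³ - α`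
  nlinarith [mul_lt_mul_of_pos_left (by nlinarith : 1 < t ^ 2 + t * α + α ^ 2) (sub_pos.mpr hlt)]

theorem norm_le_plastic_of_isRoot {𝕜 : Type*} [NormedField 𝕜] {α : ℝ} (hα : 1 < α)
    (hroot : α ^ 3 = α + 1) {z : 𝕜} (hz : (X * (X ^ 2 + 1) * (X ^ 3 - X - 1) : 𝕜[X]).IsRoot z) :
    ‖z‖ ≤ α := by
  rw [root_mul, root_mul] at hz
  simp only [IsRoot.def, eval_X, eval_add, eval_sub, eval_pow, eval_one] at hz
  rcases hz with (hzero | hsq) | hcube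
  · simpa [hzero] using (zero_lt_one.trans hα).le
  · have : ‖z‖ ^ 2 = 1 := by rw [← norm_pow, eq_neg_of_add_eq_zero_left hsq, norm_neg, norm_one]
    rw [(pow_eq_one_iff_of_nonneg (norm_nonneg z) two_ne_zero).mp this]
    exact hα.le
  · refine le_of_pow_three_le_add_one ?_ hα hroot
    have hz3 : z ^ 3 = z + 1 := by linear_combination hcube
    calc ‖z‖ ^ 3 = ‖z + 1‖ := by rw [← norm_pow, hz3]
      _ ≤ ‖z‖ + 1 := by simpa using norm_add_le z 1

theorem stmt_9_general (α : ℝ) (hα1 : 1 < α) (hroot : α ^ 3 = α + 1) :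
    Mmpds.charpoly.IsRoot α ∧
    (∀ x : ℝ, Mmpds.charpoly.IsRoot x → x ≤ α) ∧
    (∀ z : ℂ, (Mmpds.map ((↑) : ℝ → ℂ)).charpoly.IsRoot z → ‖z‖ ≤ α) := by
  refine ⟨?_, fun x hx => ?_, fun z hz => ?_⟩
  · simp [charpoly_Mmpds, hroot]
  · rw [charpoly_Mmpds] at hx
    exact (Real.le_norm_self x).trans (norm_le_plastic_of_isRoot hα1 hroot hx)
  · have hC : (Mmpds.map ((↑) : ℝ → ℂ)).charpoly = _ := charpoly_map_Mmpds Complex.ofRealHom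
    rw [hC] at hz
    exact norm_le_plastic_of_isRoot hα1 hroot hz

theorem stmt_9 (α : ℝ) (hα1 : 1 < α) (hα2 : α < 2) (hroot : α ^ 3 = α + 1) :
    Mmpds.charpoly.IsRoot α ∧
    (∀ x : ℝ, Mmpds.charpoly.IsRoot x → x ≤ α) ∧
    (∀ z : ℂ, (Mmpds.map ((↑) : ℝ → ℂ)).charpoly.IsRoot z → ‖z‖ ≤ α) :=
  stmt_9_general α hα1 hroot
end

section
/- For every odd integer r ≥ 3 and every positive integer k, the tree T_{r,k} on (r+6)k+1 vertices built from k copies of the path P_{r+6} whose central vertices are all joined to one new vertex v has at least 15^k r-matchings. Hence the maximum number of r-matchings over trees of order n is Ω(15^{n/(r+6)}). -/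
/-- distance between two edges of a graph: the minimum graph distance between an
endpoint of one and an endpoint of the other. -/
noncomputable def edgeDist {V : Type*} (G : SimpleGraph V) (e f : Sym2 V) : ℕ :=
  sInf {d : ℕ | ∃ u ∈ e, ∃ v ∈ f, d = G.dist u v}

/-- an `r`-matching: a set of edges of `G`, any two distinct ones at distance at
least `r`. -/
def IsRMatching {V : Type*} (G : SimpleGraph V) (r : ℕ) (M : Set (Sym2 V)) : Prop :=
  M ⊆ G.edgeSet ∧ ∀ e ∈ M, ∀ f ∈ M, e ≠ f → r ≤ edgeDist G e f

/-- the tree obtained from `k` disjoint copies of the path on `r + 6` vertices by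
joining the central vertex of each copy to one new vertex (the vertex `none`). -/
def treePr6 (r k : ℕ) : SimpleGraph (Option (Fin k × Fin (r + 6))) :=
  SimpleGraph.fromRel (fun x y =>
    (∃ (i : Fin k) (a : Fin (r + 5)), x = some (i, a.castSucc) ∧ y = some (i, a.succ)) ∨
    (x = none ∧ ∃ i : Fin k,
      y = some (i, ⟨(r + 5) / 2, Nat.lt_succ_of_le (Nat.div_le_self (r + 5) 2)⟩)))

/-!
Each copy of `P_{r+6}` (vertices `0, …, r+5`, centre `c = (r+5)/2`) receives at most one of the
three edges nearest its left end and at most one of the three nearest its right end, avoiding the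
single pair `{2,3}`, `{r+2,r+3}` that is at distance `r - 1`: this gives `15` choices per copy.
All other pairs of chosen edges are far apart. In one copy the endpoints differ by at least `r`
in position, and positions form a `1`-Lipschitz potential. Across two copies every endpoint is at
height `|x - c| + 1 ≥ (r+1)/2` above the new vertex, and the height, counted positively on one
copy and negatively elsewhere, is again a `1`-Lipschitz potential. For arbitrary `n`, hanging
`(n - 1) % (r + 6)` leaves on the new vertex of `T_{r,k}` with `k = (n - 1) / (r + 6)` gives a
tree on `n` vertices, and its distances restrict to those of `T_{r,k}` because collapsing the
leaves is a retraction.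
-/

open Function

namespace SimpleGraph

variable {V W α : Type*} [LinearOrder α] {G : SimpleGraph V} {H : SimpleGraph W}

theorem Reachable.le_add_dist {u v : V} (huv : G.Reachable u v) {φ : V → ℤ}
    (hφ : ∀ ⦃x y⦄, G.Adj x y → φ x ≤ φ y + 1) : φ u ≤ φ v + G.dist u v := by
  obtain ⟨p, hp⟩ := huv.exists_walk_length_eq_dist
  rw [← hp]
  clear hp huv
  induction p with
  | nil => simp
  | cons hadj p ih => have := hφ hadj; rw [Walk.length_cons]; push_cast; omega

theorem Connected.dist_le_dist_of_leftInverse (hG : G.Connected) (f : G →g H) {g : W → V}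
    (hgf : LeftInverse g f) (hg : ∀ ⦃x y⦄, H.Adj x y → G.Adj (g x) (g y) ∨ g x = g y)
    (u v : V) : G.dist u v ≤ H.dist (f u) (f v) := by
  have key : ∀ {x y} (p : H.Walk x y), G.dist (g x) (g y) ≤ p.length := by
    intro x y p
    induction p with
    | nil => simp
    | @cons x z y hadj p ih =>
      rw [Walk.length_cons]
      rcases hg hadj with h | h
      · calc G.dist (g x) (g y) ≤ G.dist (g x) (g z) + G.dist (g z) (g y) := hG.dist_triangle
          _ ≤ p.length + 1 := by rw [dist_eq_one_iff_adj.2 h]; omega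
      · rw [h]; omega
  obtain ⟨p, hp⟩ := ((hG u v).map f).exists_walk_length_eq_dist
  simpa only [hgf u, hgf v, hp] using key p

theorem le_edgeDist_iff {e f : Sym2 V} {r : ℕ} :
    r ≤ edgeDist G e f ↔ ∀ u ∈ e, ∀ v ∈ f, r ≤ G.dist u v := by
  refine ⟨fun h u hu v hv => h.trans (csInf_le (OrderBot.bddBelow _) ⟨u, hu, v, hv, rfl⟩),
    fun h => le_csInf ⟨_, _, e.out_fst_mem, _, f.out_fst_mem, rfl⟩ ?_⟩
  rintro _ ⟨u, hu, v, hv, rfl⟩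
  exact h u hu v hv

theorem IsRMatching.map {r : ℕ} {M : Set (Sym2 V)} (hM : IsRMatching G r M) (f : G →g H)
    (hdist : ∀ u v, G.dist u v ≤ H.dist (f u) (f v)) :
    IsRMatching H r (Sym2.map f '' M) := by
  refine ⟨?_, ?_⟩
  · rintro _ ⟨e, he, rfl⟩
    exact f.map_mem_edgeSet (hM.1 he)
  · rintro _ ⟨e, he, rfl⟩ _ ⟨e', he', rfl⟩ hne
    have hle := le_edgeDist_iff.1 (hM.2 e he e' he' (ne_of_apply_ne _ hne))
    rw [le_edgeDist_iff]
    intro x hx y hy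
    obtain ⟨u, hu, rfl⟩ := Sym2.mem_map.1 hx
    obtain ⟨v, hv, rfl⟩ := Sym2.mem_map.1 hy
    exact (hle u hu v hv).trans (hdist u v)

theorem Connected.card_rMatchings_le_of_leftInverse [Finite W] (hG : G.Connected) (r : ℕ)
    (f : G →g H) {g : W → V} (hgf : LeftInverse g f)
    (hg : ∀ ⦃x y⦄, H.Adj x y → G.Adj (g x) (g y) ∨ g x = g y) :
    Nat.card {M : Set (Sym2 V) // IsRMatching G r M} ≤
      Nat.card {M : Set (Sym2 W) // IsRMatching H r M} :=
  Nat.card_le_card_of_injective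
    (fun M => ⟨Sym2.map f '' M.1, IsRMatching.map M.2 f (hG.dist_le_dist_of_leftInverse f hgf hg)⟩)
    (fun _ _ h => Subtype.ext <|
      Set.image_injective.2 (Sym2.map.injective hgf.injective) (congrArg Subtype.val h))

theorem Iso.card_rMatchings_le [Finite W] (φ : G ≃g H) (hG : G.Connected) (r : ℕ) :
    Nat.card {M : Set (Sym2 V) // IsRMatching G r M} ≤
      Nat.card {M : Set (Sym2 W) // IsRMatching H r M} :=
  hG.card_rMatchings_le_of_leftInverse r φ.toHom (g := φ.symm) φ.symm_apply_apply
    fun _ _ h => Or.inl (φ.symm.map_adj_iff.2 h)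

def IsForestHeight (G : SimpleGraph V) (h : V → α) : Prop :=
  ∀ x, {y | G.Adj x y ∧ h y ≤ h x}.Subsingleton

/-- The highest vertex of a cycle has two distinct neighbours on it, neither of them higher. -/
theorem IsForestHeight.isAcyclic {h : V → α} (hh : G.IsForestHeight h) : G.IsAcyclic := by
  classical
  intro v c hc
  obtain ⟨u, hu, hmax⟩ := c.support.toFinset.exists_max_image h ⟨v, by simp⟩
  rw [List.mem_toFinset] at hu
  have hc' := hc.rotate hu
  have hlow : ∀ i, h ((c.rotate u hu).getVert i) ≤ h u := fun i => hmax _ <| List.mem_toFinset.2 <|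
    (c.mem_support_rotate_iff u hu).1 ((c.rotate u hu).getVert_mem_support i)
  exact hc'.snd_ne_penultimate <| hh u
    ⟨(c.rotate u hu).adj_snd hc'.not_nil, hlow 1⟩
    ⟨((c.rotate u hu).adj_penultimate hc'.not_nil).symm, hlow _⟩

section withLeaves

variable (G) in
def withLeaves (v : V) (L : Type*) : SimpleGraph (V ⊕ L) where
  Adj
    | .inl a, .inl b => G.Adj a b
    | .inl a, .inr _ => a = v
    | .inr _, .inl b => b = v
    | .inr _, .inr _ => False
  symm := ⟨by rintro (a | a) (b | b) h <;> simp_all [G.adj_comm]⟩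
  loopless := ⟨by rintro (a | a) h <;> simp_all⟩

variable {v : V} {L : Type*}

@[simp] theorem withLeaves_adj_inl_inl {a b : V} :
    (G.withLeaves v L).Adj (.inl a) (.inl b) ↔ G.Adj a b := Iff.rfl

@[simp] theorem withLeaves_adj_inl_inr {a : V} {l : L} :
    (G.withLeaves v L).Adj (.inl a) (.inr l) ↔ a = v := Iff.rfl

@[simp] theorem withLeaves_adj_inr_inl {l : L} {b : V} :
    (G.withLeaves v L).Adj (.inr l) (.inl b) ↔ b = v := Iff.rfl

@[simp] theorem withLeaves_adj_inr_inr {l m : L} :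
    ¬ (G.withLeaves v L).Adj (.inr l) (.inr m) := id

variable (G v L) in
def inlWithLeaves : G →g G.withLeaves v L := ⟨Sum.inl, id⟩

theorem Connected.withLeaves (hG : G.Connected) : (G.withLeaves v L).Connected := by
  refine (connected_iff_exists_forall_reachable _).2 ⟨.inl v, ?_⟩
  rintro (a | l)
  · exact (hG v a).map (inlWithLeaves G v L)
  · exact (withLeaves_adj_inl_inr.2 rfl).reachable

theorem IsForestHeight.withLeaves {h : V → α}
    (hh : G.IsForestHeight h) {t : α} (ht : h v < t) :
    (G.withLeaves v L).IsForestHeight (Sum.elim h fun _ => t) := by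
  rintro (x | l) (y | m) ⟨hy, hyx⟩ (z | n) ⟨hz, hzx⟩ <;> simp_all [ht.not_ge]
  exact hh x ⟨hy, hyx⟩ ⟨hz, hzx⟩

theorem Connected.card_rMatchings_le_withLeaves [Finite V] [Finite L] (hG : G.Connected)
    (r : ℕ) : Nat.card {M : Set (Sym2 V) // IsRMatching G r M} ≤
      Nat.card {M : Set (Sym2 (V ⊕ L)) // IsRMatching (G.withLeaves v L) r M} :=
  hG.card_rMatchings_le_of_leftInverse r (inlWithLeaves G v L) (g := Sum.elim id fun _ => v)
    (fun _ => rfl) (by rintro (a | l) (b | m) h <;> simp_all)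

end withLeaves

end SimpleGraph

open SimpleGraph

/-- A choice of at most one of the edges `{l, l+1}` (`l < 3`) and at most one of the edges
`{r+2+ρ, r+3+ρ}` (`ρ < 3`) of a copy of `P_{r+6}`; `(some 2, some 0)` is excluded because those
two edges are at distance `r - 1`. -/
abbrev CopyChoice : Type := {c : Option (Fin 3) × Option (Fin 3) // c ≠ (some 2, some 0)}

namespace CopyChoice

def positions (r : ℕ) (c : CopyChoice) : Set (Fin (r + 5)) :=
  {a | ∃ l, c.1.1 = some l ∧ (a : ℕ) = l} ∪ {a | ∃ ρ, c.1.2 = some ρ ∧ (a : ℕ) = r + 2 + ρ}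

variable {r : ℕ}

theorem fst_eq_some_iff (hr : 1 ≤ r) {c : CopyChoice} {l : Fin 3} :
    c.1.1 = some l ↔ (⟨l, by omega⟩ : Fin (r + 5)) ∈ c.positions r := by
  refine ⟨fun h => .inl ⟨l, h, rfl⟩, ?_⟩
  rintro (⟨l', h, hl⟩ | ⟨ρ, -, h⟩)
  · rwa [Fin.ext (by simpa using hl : (l : ℕ) = l')]
  · rw [Fin.val_mk] at h; omega

theorem snd_eq_some_iff (hr : 1 ≤ r) {c : CopyChoice} {ρ : Fin 3} :
    c.1.2 = some ρ ↔ (⟨r + 2 + ρ, by omega⟩ : Fin (r + 5)) ∈ c.positions r := by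
  refine ⟨fun h => .inr ⟨ρ, h, rfl⟩, ?_⟩
  rintro (⟨l, -, h⟩ | ⟨ρ', h, hρ⟩)
  · rw [Fin.val_mk] at h; omega
  · rwa [Fin.ext (by simpa using hρ : (ρ : ℕ) = ρ')]

theorem positions_injective (hr : 1 ≤ r) : Injective (positions r) := by
  intro c c' h
  refine Subtype.ext (Prod.ext (Option.ext fun l => ?_) (Option.ext fun ρ => ?_))
  · rw [fst_eq_some_iff hr, fst_eq_some_iff hr, h]
  · rw [snd_eq_some_iff hr, snd_eq_some_iff hr, h]

theorem val_ne_two_or_val_ne_zero {c : CopyChoice} {l ρ : Fin 3} (hl : c.1.1 = some l)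
    (hρ : c.1.2 = some ρ) : (l : ℕ) ≠ 2 ∨ (ρ : ℕ) ≠ 0 := by
  by_contra! h
  exact c.2 (Prod.ext (hl.trans (congrArg some (Fin.ext h.1)))
    (hρ.trans (congrArg some (Fin.ext h.2))))

theorem le_or_le_of_mem_positions {c : CopyChoice} {a : Fin (r + 5)}
    (ha : a ∈ c.positions r) : (a : ℕ) + 1 ≤ 3 ∨ r + 2 ≤ a := by
  rcases ha with ⟨l, -, ha⟩ | ⟨ρ, -, ha⟩ <;> omega

theorem add_le_or_add_le_of_mem_positions {c : CopyChoice} {a b : Fin (r + 5)}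
    (ha : a ∈ c.positions r) (hb : b ∈ c.positions r) (hab : a ≠ b) :
    (a : ℕ) + r + 1 ≤ b ∨ (b : ℕ) + r + 1 ≤ a := by
  rw [Fin.ne_iff_vne] at hab
  rcases ha with ⟨l, hl, ha⟩ | ⟨ρ, hρ, ha⟩ <;> rcases hb with ⟨l', hl', hb⟩ | ⟨ρ', hρ', hb⟩
  · cases hl.symm.trans hl'; omega
  · have := val_ne_two_or_val_ne_zero hl hρ'; omega
  · have := val_ne_two_or_val_ne_zero hl' hρ; omega
  · cases hρ.symm.trans hρ'; omega

end CopyChoice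

namespace treePr6

variable {r k : ℕ}

@[simp] theorem adj_some_some {i j : Fin k} {p q : Fin (r + 6)} :
    (treePr6 r k).Adj (some (i, p)) (some (j, q)) ↔
      i = j ∧ ((p : ℕ) + 1 = q ∨ (q : ℕ) + 1 = p) := by
  simp only [treePr6, fromRel_adj, ne_eq, Option.some.injEq, Prod.mk.injEq, Fin.ext_iff, not_and,
    Fin.val_castSucc, Fin.val_succ, reduceCtorEq, exists_and_right, exists_apply_eq_apply',
    true_and, false_and, or_false]
  constructor
  · rintro ⟨-, ⟨_, _, ⟨h₁, h₂⟩, h₃, h₄⟩ | ⟨_, _, ⟨h₁, h₂⟩, h₃, h₄⟩⟩ <;> omega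
  · rintro ⟨hij, h | h⟩
    · exact ⟨by omega, .inl ⟨i, ⟨p, by omega⟩, ⟨rfl, rfl⟩, hij.symm, h.symm⟩⟩
    · exact ⟨by omega, .inr ⟨j, ⟨q, by omega⟩, ⟨rfl, rfl⟩, hij, h.symm⟩⟩

@[simp] theorem adj_none_some {i : Fin k} {p : Fin (r + 6)} :
    (treePr6 r k).Adj none (some (i, p)) ↔ (p : ℕ) = (r + 5) / 2 := by
  simp [treePr6, Fin.ext_iff]

@[simp] theorem adj_some_none {i : Fin k} {p : Fin (r + 6)} :
    (treePr6 r k).Adj (some (i, p)) none ↔ (p : ℕ) = (r + 5) / 2 := by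
  rw [adj_comm, adj_none_some]

def copy (i : Fin k) : pathGraph (r + 6) →g treePr6 r k where
  toFun p := some (i, p)
  map_rel' h := by simpa [pathGraph_adj] using h

theorem connected : (treePr6 r k).Connected := by
  refine (connected_iff_exists_forall_reachable _).2 ⟨none, ?_⟩
  rintro (_ | ⟨i, p⟩)
  · rfl
  · have hcenter : (treePr6 r k).Adj none (some (i, ⟨(r + 5) / 2, by omega⟩)) :=
      adj_none_some.2 rfl
    exact hcenter.reachable.trans (((pathGraph_connected _).preconnected _ p).map (copy i))

/-- The distance to the root `none`. -/
def height : Option (Fin k × Fin (r + 6)) → ℤ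
  | none => 0
  | some (_, p) => |(p : ℤ) - ((r + 5) / 2 : ℕ)| + 1

theorem isForestHeight_height : (treePr6 r k).IsForestHeight height := by
  rintro (_ | ⟨i, p⟩) (_ | ⟨j, q⟩) ⟨hy, hyx⟩ (_ | ⟨j', q'⟩) ⟨hz, hzx⟩ <;>
    simp [height, abs_eq_max_neg, Fin.ext_iff] at * <;> omega

theorem le_add_dist_of_same_copy (i : Fin k) (p q : Fin (r + 6)) :
    (p : ℤ) ≤ q + (treePr6 r k).dist (some (i, p)) (some (i, q)) := by
  let φ : Option (Fin k × Fin (r + 6)) → ℤ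
    | some (j, a) => if j = i then a else ((r + 5) / 2 : ℕ)
    | none => ((r + 5) / 2 : ℕ)
  have := (connected.preconnected (some (i, p)) (some (i, q))).le_add_dist (φ := φ) ?_
  · simpa [φ] using this
  rintro (_ | ⟨j, a⟩) (_ | ⟨j', b⟩) h <;> simp at h <;> simp [φ] <;> split_ifs <;> omega

theorem height_add_height_le_dist {i j : Fin k} (hij : i ≠ j) (p q : Fin (r + 6)) :
    height (some (i, p)) + height (some (j, q)) ≤
      (treePr6 r k).dist (some (i, p)) (some (j, q)) := by
  let φ : Option (Fin k × Fin (r + 6)) → ℤ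
    | some (l, a) => if l = i then height (some (l, a)) else - height (some (l, a))
    | none => 0
  have := (connected.preconnected (some (i, p)) (some (j, q))).le_add_dist (φ := φ) ?_
  · simp only [φ, if_pos, if_neg hij.symm] at this
    linarith
  rintro (_ | ⟨l, a⟩) (_ | ⟨l', b⟩) h <;> simp at h <;>
    simp [φ, height, abs_eq_max_neg] <;> split_ifs <;> omega

def copyEdge (i : Fin k) (a : Fin (r + 5)) : Sym2 (Option (Fin k × Fin (r + 6))) :=
  s(some (i, a.castSucc), some (i, a.succ))

theorem copyEdge_mem_edgeSet (i : Fin k) (a : Fin (r + 5)) :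
    copyEdge i a ∈ (treePr6 r k).edgeSet := by
  simp [copyEdge]

theorem copyEdge_inj {i j : Fin k} {a b : Fin (r + 5)} :
    copyEdge i a = copyEdge j b ↔ i = j ∧ a = b := by
  simp [copyEdge, Fin.ext_iff]
  omega

theorem exists_of_mem_copyEdge {i : Fin k} {a : Fin (r + 5)}
    {x : Option (Fin k × Fin (r + 6))} (hx : x ∈ copyEdge i a) :
    ∃ p : Fin (r + 6), x = some (i, p) ∧ (a : ℕ) ≤ p ∧ (p : ℕ) ≤ a + 1 := by
  rcases Sym2.mem_iff.1 hx with rfl | rfl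
  · exact ⟨_, rfl, by simp⟩
  · exact ⟨_, rfl, by simp⟩

def choiceMatching (f : Fin k → CopyChoice) : Set (Sym2 (Option (Fin k × Fin (r + 6)))) :=
  ⋃ i, copyEdge i '' (f i).positions r

theorem copyEdge_mem_choiceMatching {f : Fin k → CopyChoice} {i : Fin k} {a : Fin (r + 5)} :
    copyEdge i a ∈ choiceMatching f ↔ a ∈ (f i).positions r := by
  simp [choiceMatching, copyEdge_inj]

theorem choiceMatching_injective (hr : 1 ≤ r) :
    Injective (choiceMatching (r := r) (k := k)) := by
  intro f g h
  funext i
  refine CopyChoice.positions_injective hr (Set.ext fun a => ?_)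
  rw [← copyEdge_mem_choiceMatching, ← copyEdge_mem_choiceMatching, h]

theorem isRMatching_choiceMatching (hodd : Odd r) (f : Fin k → CopyChoice) :
    IsRMatching (treePr6 r k) r (choiceMatching f) := by
  have hcenter : 2 * ((r + 5) / 2) = r + 5 := by obtain ⟨t, rfl⟩ := hodd; omega
  refine ⟨?_, ?_⟩
  · rintro _ ⟨_, ⟨i, rfl⟩, a, -, rfl⟩
    exact copyEdge_mem_edgeSet i a
  · rintro _ ⟨_, ⟨i, rfl⟩, a, ha, rfl⟩ _ ⟨_, ⟨j, rfl⟩, b, hb, rfl⟩ hne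
    rw [le_edgeDist_iff]
    intro x hx y hy
    obtain ⟨p, rfl, hp⟩ := exists_of_mem_copyEdge hx
    obtain ⟨q, rfl, hq⟩ := exists_of_mem_copyEdge hy
    rcases eq_or_ne i j with rfl | hij
    · have hgap := CopyChoice.add_le_or_add_le_of_mem_positions ha hb
        (by rintro rfl; exact hne rfl)
      have hpq := le_add_dist_of_same_copy i p q
      have hqp := le_add_dist_of_same_copy i q p
      rw [dist_comm] at hqp
      omega
    · have hdist := height_add_height_le_dist hij p q
      have := (f i).le_or_le_of_mem_positions ha
      have := (f j).le_or_le_of_mem_positions hb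
      simp only [height, abs_eq_max_neg] at hdist
      omega

end treePr6

open treePr6 in
theorem card_rMatchings_treePr6 {r : ℕ} (hodd : Odd r) (k : ℕ) :
    15 ^ k ≤ Nat.card {M : Set (Sym2 (Option (Fin k × Fin (r + 6)))) //
      IsRMatching (treePr6 r k) r M} := by
  calc 15 ^ k = Nat.card (Fin k → CopyChoice) := by simp
    _ ≤ _ := Nat.card_le_card_of_injective
      (fun f => ⟨choiceMatching f, isRMatching_choiceMatching hodd f⟩)
      (fun f g h => choiceMatching_injective hodd.pos (congrArg Subtype.val h))

theorem exists_tree_card_rMatchings {r : ℕ} (hodd : Odd r) {n : ℕ} (hn : 1 ≤ n) :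
    ∃ T : SimpleGraph (Fin n), T.Connected ∧ T.IsAcyclic ∧
      15 ^ ((n - 1) / (r + 6)) ≤ Nat.card {M : Set (Sym2 (Fin n)) // IsRMatching T r M} := by
  have hdiv := Nat.div_add_mod (n - 1) (r + 6)
  set k := (n - 1) / (r + 6)
  let L := Fin ((n - 1) % (r + 6))
  let H := (treePr6 r k).withLeaves none L
  have hcard : Fintype.card (Fin n) = Fintype.card (Option (Fin k × Fin (r + 6)) ⊕ L) := by
    simp only [L, Fintype.card_fin, Fintype.card_sum, Fintype.card_option, Fintype.card_prod]
    rw [mul_comm] at hdiv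
    omega
  let e := Fintype.equivOfCardEq hcard
  have hH : H.Connected := treePr6.connected.withLeaves
  have hHacyclic : H.IsAcyclic :=
    (treePr6.isForestHeight_height.withLeaves (t := 1) (by simp [treePr6.height])).isAcyclic
  refine ⟨H.comap e, (Iso.comap e H).connected_iff.2 hH,
    (Iso.comap e H).isAcyclic_iff.2 hHacyclic, ?_⟩
  calc 15 ^ k ≤ _ := card_rMatchings_treePr6 hodd k
    _ ≤ _ := treePr6.connected.card_rMatchings_le_withLeaves r
    _ ≤ _ := (Iso.comap e H).symm.card_rMatchings_le hH r

theorem inv_mul_rpow_div_le_pow_div {b : ℝ} (hb : 1 ≤ b) {n d : ℕ} (hd : 0 < d) :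
    b⁻¹ * b ^ ((n : ℝ) / d) ≤ b ^ ((n - 1) / d) := by
  have hle : (n : ℝ) / d ≤ ((n - 1) / d : ℕ) + 1 := by
    rw [div_le_iff₀ (by exact_mod_cast hd)]
    exact_mod_cast (show n ≤ ((n - 1) / d + 1) * d by
      have := Nat.lt_mul_div_succ (n - 1) hd; rw [mul_comm] at this; omega)
  calc b⁻¹ * b ^ ((n : ℝ) / d) ≤ b⁻¹ * b ^ ((((n - 1) / d : ℕ) : ℝ) + 1) := by gcongr
    _ = b ^ ((n - 1) / d) := by
      rw [Real.rpow_add_one (by positivity), Real.rpow_natCast]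
      field_simp

theorem stmt_13_general (r : ℕ) (hodd : Odd r) :
    (∀ k : ℕ, 0 < k →
      15 ^ k ≤ Nat.card {M : Set (Sym2 (Option (Fin k × Fin (r + 6)))) //
        IsRMatching (treePr6 r k) r M}) ∧
    ∃ c : ℝ, 0 < c ∧ ∀ n : ℕ, 1 ≤ n → ∃ T : SimpleGraph (Fin n),
      T.Connected ∧ T.IsAcyclic ∧
      c * (15 : ℝ) ^ ((n : ℝ) / (r + 6 : ℝ)) ≤
        Nat.card {M : Set (Sym2 (Fin n)) // IsRMatching T r M} := by
  refine ⟨fun k _ => card_rMatchings_treePr6 hodd k, 15⁻¹, by norm_num, fun n hn => ?_⟩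
  obtain ⟨T, hconn, hacyc, hcard⟩ := exists_tree_card_rMatchings hodd hn
  refine ⟨T, hconn, hacyc, ?_⟩
  calc (15 : ℝ)⁻¹ * 15 ^ ((n : ℝ) / (r + 6 : ℝ)) ≤ 15 ^ ((n - 1) / (r + 6)) := by
        exact_mod_cast inv_mul_rpow_div_le_pow_div (b := 15) (by norm_num) (d := r + 6)
          (by omega)
    _ ≤ _ := by exact_mod_cast hcard

theorem stmt_13 (r : ℕ) (hr : 3 ≤ r) (hodd : Odd r) :
    (∀ k : ℕ, 0 < k →
      15 ^ k ≤ Nat.card {M : Set (Sym2 (Option (Fin k × Fin (r + 6)))) //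
        IsRMatching (treePr6 r k) r M}) ∧
    ∃ c : ℝ, 0 < c ∧ ∀ n : ℕ, 1 ≤ n → ∃ T : SimpleGraph (Fin n),
      T.Connected ∧ T.IsAcyclic ∧
      c * (15 : ℝ) ^ ((n : ℝ) / (r + 6 : ℝ)) ≤
        Nat.card {M : Set (Sym2 (Fin n)) // IsRMatching T r M} :=
  stmt_13_general r hodd
end
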